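/- arXiv:2008.00449 — 2 statements merged into one kernel-verified Lean document; each statement's English description precedes it below -/
import Mathlib

section
/- Let U and V be complex Banach spaces, U₀, U₁ ⊆ U and V₀, V₁ ⊆ V closed linear subspaces, and H : U → V a bounded linear operator with H(U₀) ⊆ V₀ and H(U₁) ⊆ V₁. Suppose the induced quotient operator H₀ : U/U₀ → V/V₀ is invertible and that max{dist(U₀, U₁), dist(V₀, V₁)} < 1 / (2(1 + ‖H‖·‖H₀⁻¹‖)). Then the quotient operator H₁ : U/U₁ → V/V₁ is invertible and ‖H₁⁻¹‖ ≤ 2‖H₀⁻¹‖. -/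
open Metric

noncomputable section

/-- The distance between two closed subspaces `A`, `B` of a normed space `U`:
`dist(A, B) = sup_{‖u‖ = 1} |dist(u, A) − dist(u, B)|`. -/
def subspaceDist {U : Type*} [NormedAddCommGroup U] [NormedSpace ℂ U]
    (A B : Submodule ℂ U) : ℝ :=
  sSup {r : ℝ | ∃ u : U, ‖u‖ = 1 ∧
    r = |Metric.infDist u (A : Set U) - Metric.infDist u (B : Set U)|}

/-!
Write `H₀, H₁` for the quotient operators, `M = ‖H₀⁻¹‖` and `δ` for the larger of the two subspace
distances. Replacing the subspace one quotients by changes the quotient norm of `u` by at most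
`δ‖u‖`. Hence the lower bound `‖x‖ ≤ M‖H₀x‖` on `U/U₀` becomes
`‖x‖ ≤ M‖H₁x‖ + δ(1 + M‖H‖)‖x‖ ≤ M‖H₁x‖ + ‖x‖/2` on `U/U₁`; and solving `H₀[u] = [v]` leaves a
residual `v - Hu ∈ V₀` whose class in `V/V₁` has norm at most `δ(1 + ‖H‖M)‖v‖ ≤ ‖v‖/2`. So `H₁` is
bounded below by `1/(2M)`, its range is closed, and every `y` lies within `‖y‖/2` of it, which
by Riesz's lemma forces the range to be everything.
-/

namespace Submodule

section Quotient

variable {R M : Type*} [Ring R] [SeminormedAddCommGroup M] [Module R M] {S : Submodule R M}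

theorem Quotient.norm_mk_eq_infDist (m : M) :
    ‖(Quotient.mk m : M ⧸ S)‖ = infDist m (S : Set M) :=
  QuotientAddGroup.norm_mk (S := S.toAddSubgroup) m

theorem Quotient.le_add_mul_norm_of_forall_mk_eq {x : M ⧸ S} {a b c : ℝ} (hc : 0 ≤ c)
    (h : ∀ m : M, Quotient.mk m = x → b ≤ a + c * ‖m‖) : b ≤ a + c * ‖x‖ := by
  by_contra! hlt
  rcases hc.eq_or_lt with rfl | hc
  · obtain ⟨m, rfl⟩ := Quotient.mk_surjective S x
    linarith [h m rfl]
  · obtain ⟨m, rfl, hm⟩ := QuotientAddGroup.norm_lt_iff.1 <|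
      (lt_div_iff₀' hc).2 (lt_sub_iff_add_lt'.2 hlt)
    have := h m rfl
    rw [lt_div_iff₀' hc] at hm
    linarith

end Quotient

variable {R M M₂ : Type*} [Ring R] [TopologicalSpace M] [AddCommGroup M] [Module R M]
  [TopologicalSpace M₂] [AddCommGroup M₂] [Module R M₂]

def mapQL (p : Submodule R M) (q : Submodule R M₂) (f : M →L[R] M₂)
    (h : p ≤ q.comap (f : M →ₗ[R] M₂)) : M ⧸ p →L[R] M₂ ⧸ q :=
  p.liftQL (q.mkQL.comp f) fun _ hx ↦ (Quotient.mk_eq_zero q).2 (h hx)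

@[simp]
theorem mapQL_mk (p : Submodule R M) (q : Submodule R M₂) (f : M →L[R] M₂)
    (h : p ≤ q.comap (f : M →ₗ[R] M₂)) (m : M) :
    mapQL p q f h (Quotient.mk m) = Quotient.mk (f m) :=
  rfl

theorem eq_top_of_infDist_le_mul_norm {𝕜 E : Type*} [NormedField 𝕜]
    [NormedAddCommGroup E] [NormedSpace 𝕜 E] {F : Submodule 𝕜 E} (hF : IsClosed (F : Set E))
    {c : ℝ} (hc : c < 1) (h : ∀ x, infDist x (F : Set E) ≤ c * ‖x‖) : F = ⊤ := by
  by_contra hne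
  obtain ⟨r, hcr, hr1⟩ := exists_between hc
  obtain ⟨x, hxF, hx⟩ := riesz_lemma hF (SetLike.exists_not_mem_of_ne_top F hne) hr1
  have hx0 : 0 < ‖x‖ := norm_pos_iff.2 fun h0 ↦ hxF (h0 ▸ F.zero_mem)
  have hle : r * ‖x‖ ≤ infDist x (F : Set E) :=
    (le_infDist ⟨0, F.zero_mem⟩).2 fun y hy ↦ dist_eq_norm x y ▸ hx y hy
  nlinarith [h x]

end Submodule

theorem ContinuousLinearMap.exists_equiv_of_norm_le_of_infDist_range_le
    {𝕜 E F : Type*} [NontriviallyNormedField 𝕜]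
    [NormedAddCommGroup E] [NormedSpace 𝕜 E] [CompleteSpace E]
    [NormedAddCommGroup F] [NormedSpace 𝕜 F] [CompleteSpace F]
    (T : E →L[𝕜] F) {C c : ℝ} (hC : 0 ≤ C) (hT : ∀ x, ‖x‖ ≤ C * ‖T x‖) (hc : c < 1)
    (hrange : ∀ y, infDist y (Set.range T) ≤ c * ‖y‖) :
    ∃ e : E ≃L[𝕜] F, (e : E →L[𝕜] F) = T ∧ ‖(e.symm : F →L[𝕜] E)‖ ≤ C := by
  have hanti : AntilipschitzWith ⟨C, hC⟩ T := T.antilipschitz_of_bound hT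
  have hker : LinearMap.ker (T : E →ₗ[𝕜] F) = ⊥ :=
    LinearMap.ker_eq_bot_of_injective hanti.injective
  have hsurj : LinearMap.range (T : E →ₗ[𝕜] F) = ⊤ := by
    have hrange' : (LinearMap.range (T : E →ₗ[𝕜] F) : Set F) = Set.range T :=
      LinearMap.coe_range _
    refine Submodule.eq_top_of_infDist_le_mul_norm ?_ hc (hrange' ▸ hrange)
    exact hrange' ▸ hanti.isClosed_range T.uniformContinuous
  refine ⟨.ofBijective T hker hsurj, rfl, ?_⟩
  refine ContinuousLinearMap.opNorm_le_bound _ hC fun y ↦ ?_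
  simpa using hT ((ContinuousLinearEquiv.ofBijective T hker hsurj).symm y)

section SubspaceDist

variable {U : Type*} [NormedAddCommGroup U] [NormedSpace ℂ U]

theorem subspaceDist_nonneg (A B : Submodule ℂ U) : 0 ≤ subspaceDist A B :=
  Real.sSup_nonneg <| by rintro r ⟨u, -, rfl⟩; exact abs_nonneg _

theorem subspaceDist_comm (A B : Submodule ℂ U) : subspaceDist A B = subspaceDist B A := by
  simp only [subspaceDist, abs_sub_comm]

theorem abs_norm_mk_sub_norm_mk_le_of_norm_eq_one (A B : Submodule ℂ U) {w : U} (hw : ‖w‖ = 1) :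
    |‖(Submodule.Quotient.mk w : U ⧸ A)‖ - ‖(Submodule.Quotient.mk w : U ⧸ B)‖|
      ≤ subspaceDist A B := by
  simp only [Submodule.Quotient.norm_mk_eq_infDist]
  refine le_csSup ⟨1, ?_⟩ ⟨w, hw, rfl⟩
  rintro r ⟨u, hu, rfl⟩
  simp only [← Submodule.Quotient.norm_mk_eq_infDist]
  exact abs_sub_le_of_nonneg_of_le (norm_nonneg _) (hu ▸ Submodule.Quotient.norm_mk_le _ _)
    (norm_nonneg _) (hu ▸ Submodule.Quotient.norm_mk_le _ _)

theorem abs_norm_mk_sub_norm_mk_le (A B : Submodule ℂ U) (u : U) :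
    |‖(Submodule.Quotient.mk u : U ⧸ A)‖ - ‖(Submodule.Quotient.mk u : U ⧸ B)‖|
      ≤ subspaceDist A B * ‖u‖ := by
  rcases eq_or_ne u 0 with rfl | hu
  · simp
  have hnorm (S : Submodule ℂ U) : ‖(Submodule.Quotient.mk u : U ⧸ S)‖
      = ‖u‖ * ‖(Submodule.Quotient.mk (NormedSpace.normalize u) : U ⧸ S)‖ := by
    conv_lhs => rw [← NormedSpace.norm_smul_normalize u]
    rw [Submodule.Quotient.mk_smul, norm_smul, norm_norm]
  rw [hnorm, hnorm, ← mul_sub, abs_mul, abs_norm, mul_comm]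
  gcongr
  exact abs_norm_mk_sub_norm_mk_le_of_norm_eq_one A B (NormedSpace.norm_normalize_eq_one_iff.2 hu)

theorem norm_mk_le_norm_mk_add_subspaceDist_mul (A B : Submodule ℂ U) (u : U) :
    ‖(Submodule.Quotient.mk u : U ⧸ B)‖
      ≤ ‖(Submodule.Quotient.mk u : U ⧸ A)‖ + subspaceDist A B * ‖u‖ := by
  linarith [neg_abs_le
    (‖(Submodule.Quotient.mk u : U ⧸ A)‖ - ‖(Submodule.Quotient.mk u : U ⧸ B)‖),
    abs_norm_mk_sub_norm_mk_le A B u]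

end SubspaceDist

section Perturbation

variable {U V : Type*} [NormedAddCommGroup U] [NormedSpace ℂ U]
  [NormedAddCommGroup V] [NormedSpace ℂ V]
  {U₀ U₁ : Submodule ℂ U} {V₀ V₁ : Submodule ℂ V} {H : U →L[ℂ] V}
  (h0 : U₀ ≤ V₀.comap (H : U →ₗ[ℂ] V)) (h1 : U₁ ≤ V₁.comap (H : U →ₗ[ℂ] V)) {M : ℝ}

theorem norm_le_mul_norm_mapQL_add (hM0 : 0 ≤ M)
    (hM : ∀ x, ‖x‖ ≤ M * ‖U₀.mapQL V₀ H h0 x‖) (x : U ⧸ U₁) :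
    ‖x‖ ≤ M * ‖U₁.mapQL V₁ H h1 x‖
      + (subspaceDist U₀ U₁ + M * ‖H‖ * subspaceDist V₀ V₁) * ‖x‖ := by
  refine Submodule.Quotient.le_add_mul_norm_of_forall_mk_eq
    (add_nonneg (subspaceDist_nonneg _ _)
      (mul_nonneg (mul_nonneg hM0 (norm_nonneg _)) (subspaceDist_nonneg _ _))) ?_
  rintro u rfl
  set dU := subspaceDist U₀ U₁
  set dV := subspaceDist V₀ V₁
  have hV := norm_mk_le_norm_mk_add_subspaceDist_mul V₁ V₀ (H u)
  rw [subspaceDist_comm] at hV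
  have hH₀ := hM (Submodule.Quotient.mk u)
  rw [Submodule.mapQL_mk] at hH₀ ⊢
  calc ‖(Submodule.Quotient.mk u : U ⧸ U₁)‖
      ≤ ‖(Submodule.Quotient.mk u : U ⧸ U₀)‖ + dU * ‖u‖ :=
        norm_mk_le_norm_mk_add_subspaceDist_mul U₀ U₁ u
    _ ≤ M * (‖(Submodule.Quotient.mk (H u) : V ⧸ V₁)‖ + dV * (‖H‖ * ‖u‖)) + dU * ‖u‖ := by
        have hdV : 0 ≤ dV := subspaceDist_nonneg _ _
        have hHu : ‖H u‖ ≤ ‖H‖ * ‖u‖ := H.le_opNorm u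
        gcongr
        exact hH₀.trans <| by gcongr; exact hV.trans <| by gcongr
    _ = M * ‖(Submodule.Quotient.mk (H u) : V ⧸ V₁)‖ + (dU + M * ‖H‖ * dV) * ‖u‖ := by ring

theorem infDist_range_mapQL_le (hM0 : 0 ≤ M) (hM : ∀ x, ‖x‖ ≤ M * ‖U₀.mapQL V₀ H h0 x‖)
    (hsurj : Function.Surjective (U₀.mapQL V₀ H h0)) (y : V ⧸ V₁) :
    infDist y (Set.range (U₁.mapQL V₁ H h1))
      ≤ subspaceDist V₀ V₁ * (1 + ‖H‖ * M) * ‖y‖ := by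
  set d := subspaceDist V₀ V₁
  have hd : 0 ≤ d := subspaceDist_nonneg _ _
  suffices key : ∀ v : V, Submodule.Quotient.mk v = y →
      infDist y (Set.range (U₁.mapQL V₁ H h1)) ≤ 0 + d * (1 + ‖H‖ * M) * ‖v‖ by
    simpa using Submodule.Quotient.le_add_mul_norm_of_forall_mk_eq (by positivity) key
  intro v hv
  obtain ⟨x₀, hx₀⟩ := hsurj (Submodule.Quotient.mk v)
  have hx₀v : ‖x₀‖ ≤ M * ‖v‖ :=
    (hM x₀).trans <| mul_le_mul_of_nonneg_left (hx₀ ▸ Submodule.Quotient.norm_mk_le _ _) hM0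
  calc infDist y (Set.range (U₁.mapQL V₁ H h1))
      ≤ d * ‖v‖ + d * ‖H‖ * ‖x₀‖ := by
        refine Submodule.Quotient.le_add_mul_norm_of_forall_mk_eq (by positivity) ?_
        rintro u rfl
        have hHu : (Submodule.Quotient.mk (v - H u) : V ⧸ V₀) = 0 := by
          rw [Submodule.Quotient.mk_sub, ← Submodule.mapQL_mk U₀ V₀ H h0, hx₀, sub_self]
        have hV := norm_mk_le_norm_mk_add_subspaceDist_mul V₀ V₁ (v - H u)
        rw [hHu, norm_zero, zero_add] at hV
        calc infDist y (Set.range (U₁.mapQL V₁ H h1))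
            ≤ dist y (U₁.mapQL V₁ H h1 (Submodule.Quotient.mk u)) :=
              infDist_le_dist_of_mem ⟨_, rfl⟩
          _ = ‖(Submodule.Quotient.mk (v - H u) : V ⧸ V₁)‖ := by
              rw [dist_eq_norm, Submodule.mapQL_mk, ← hv, Submodule.Quotient.mk_sub]
          _ ≤ d * (‖v‖ + ‖H‖ * ‖u‖) :=
              hV.trans <| mul_le_mul_of_nonneg_left
                ((norm_sub_le _ _).trans (add_le_add_right (H.le_opNorm u) _)) hd
          _ = d * ‖v‖ + d * ‖H‖ * ‖u‖ := by ring
    _ ≤ d * ‖v‖ + d * ‖H‖ * (M * ‖v‖) := by gcongr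
    _ = 0 + d * (1 + ‖H‖ * M) * ‖v‖ := by ring

end Perturbation

theorem quotient_operator_invertible_perturbation_general
    {U V : Type*} [NormedAddCommGroup U] [NormedSpace ℂ U] [CompleteSpace U]
    [NormedAddCommGroup V] [NormedSpace ℂ V] [CompleteSpace V]
    (U₀ U₁ : Submodule ℂ U) (V₀ V₁ : Submodule ℂ V)
    (hU₁ : IsClosed (U₁ : Set U))
    (hV₁ : IsClosed (V₁ : Set V))
    (H : U →L[ℂ] V)
    (h0 : U₀ ≤ V₀.comap (H : U →ₗ[ℂ] V)) (h1 : U₁ ≤ V₁.comap (H : U →ₗ[ℂ] V))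
    (e₀ : (U ⧸ U₀) ≃L[ℂ] (V ⧸ V₀))
    (he₀ : (e₀ : (U ⧸ U₀) →ₗ[ℂ] (V ⧸ V₀)) = Submodule.mapQ U₀ V₀ (H : U →ₗ[ℂ] V) h0)
    (hdist : max (subspaceDist U₀ U₁) (subspaceDist V₀ V₁)
      < 1 / (2 * (1 + ‖H‖ * ‖(e₀.symm : (V ⧸ V₀) →L[ℂ] (U ⧸ U₀))‖))) :
    ∃ e₁ : (U ⧸ U₁) ≃L[ℂ] (V ⧸ V₁),
      (e₁ : (U ⧸ U₁) →ₗ[ℂ] (V ⧸ V₁)) = Submodule.mapQ U₁ V₁ (H : U →ₗ[ℂ] V) h1 ∧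
      ‖(e₁.symm : (V ⧸ V₁) →L[ℂ] (U ⧸ U₁))‖
        ≤ 2 * ‖(e₀.symm : (V ⧸ V₀) →L[ℂ] (U ⧸ U₀))‖ := by
  -- the quotients by the closed subspaces `U₁`, `V₁` are normed, not merely seminormed
  have := hU₁
  have := hV₁
  set M := ‖(e₀.symm : (V ⧸ V₀) →L[ℂ] (U ⧸ U₀))‖
  have hM0 : 0 ≤ M := by positivity
  have he₀' : ⇑e₀ = U₀.mapQL V₀ H h0 := funext (LinearMap.congr_fun he₀)
  have hM (x : U ⧸ U₀) : ‖x‖ ≤ M * ‖U₀.mapQL V₀ H h0 x‖ := by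
    simpa [← he₀'] using (e₀.symm : (V ⧸ V₀) →L[ℂ] (U ⧸ U₀)).le_opNorm (e₀ x)
  have hsurj : Function.Surjective (U₀.mapQL V₀ H h0) := he₀' ▸ e₀.surjective
  have hU := le_max_left (subspaceDist U₀ U₁) (subspaceDist V₀ V₁)
  have hV := le_max_right (subspaceDist U₀ U₁) (subspaceDist V₀ V₁)
  have hsmall : max (subspaceDist U₀ U₁) (subspaceDist V₀ V₁) * (1 + ‖H‖ * M) ≤ 1 / 2 := by
    rw [lt_div_iff₀ (by positivity)] at hdist
    linarith
  have hsmallU : subspaceDist U₀ U₁ + M * ‖H‖ * subspaceDist V₀ V₁ ≤ 1 / 2 := by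
    nlinarith [mul_le_mul_of_nonneg_left hV (by positivity : 0 ≤ M * ‖H‖)]
  have hsmallV : subspaceDist V₀ V₁ * (1 + ‖H‖ * M) ≤ 1 / 2 :=
    (mul_le_mul_of_nonneg_right hV (by positivity)).trans hsmall
  obtain ⟨e₁, he₁, he₁_symm⟩ :=
    (U₁.mapQL V₁ H h1).exists_equiv_of_norm_le_of_infDist_range_le (C := 2 * M) (c := 1 / 2)
      (by positivity)
      (fun x ↦ by
        linarith [norm_le_mul_norm_mapQL_add h0 h1 hM0 hM x,
          mul_le_mul_of_nonneg_right hsmallU (norm_nonneg x)])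
      (by norm_num)
      (fun y ↦ (infDist_range_mapQL_le h0 h1 hM0 hM hsurj y).trans <|
        mul_le_mul_of_nonneg_right hsmallV (norm_nonneg y))
  exact ⟨e₁, congrArg ContinuousLinearMap.toLinearMap he₁, he₁_symm⟩

/-- If `H : U → V` maps `U₀` into `V₀` and `U₁` into `V₁`, the induced
quotient operator `H₀ : U/U₀ → V/V₀` is invertible, and
`max{dist(U₀,U₁), dist(V₀,V₁)} < 1/(2(1 + ‖H‖‖H₀⁻¹‖))`, then the quotient operator
`H₁ : U/U₁ → V/V₁` is invertible with `‖H₁⁻¹‖ ≤ 2‖H₀⁻¹‖`. -/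
theorem quotient_operator_invertible_perturbation
    {U V : Type*} [NormedAddCommGroup U] [NormedSpace ℂ U] [CompleteSpace U]
    [NormedAddCommGroup V] [NormedSpace ℂ V] [CompleteSpace V]
    (U₀ U₁ : Submodule ℂ U) (V₀ V₁ : Submodule ℂ V)
    (hU₀ : IsClosed (U₀ : Set U)) (hU₁ : IsClosed (U₁ : Set U))
    (hV₀ : IsClosed (V₀ : Set V)) (hV₁ : IsClosed (V₁ : Set V))
    (H : U →L[ℂ] V)
    (h0 : U₀ ≤ V₀.comap (H : U →ₗ[ℂ] V)) (h1 : U₁ ≤ V₁.comap (H : U →ₗ[ℂ] V))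
    (e₀ : (U ⧸ U₀) ≃L[ℂ] (V ⧸ V₀))
    (he₀ : (e₀ : (U ⧸ U₀) →ₗ[ℂ] (V ⧸ V₀)) = Submodule.mapQ U₀ V₀ (H : U →ₗ[ℂ] V) h0)
    (hdist : max (subspaceDist U₀ U₁) (subspaceDist V₀ V₁)
      < 1 / (2 * (1 + ‖H‖ * ‖(e₀.symm : (V ⧸ V₀) →L[ℂ] (U ⧸ U₀))‖))) :
    ∃ e₁ : (U ⧸ U₁) ≃L[ℂ] (V ⧸ V₁),
      (e₁ : (U ⧸ U₁) →ₗ[ℂ] (V ⧸ V₁)) = Submodule.mapQ U₁ V₁ (H : U →ₗ[ℂ] V) h1 ∧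
      ‖(e₁.symm : (V ⧸ V₁) →L[ℂ] (U ⧸ U₁))‖
        ≤ 2 * ‖(e₀.symm : (V ⧸ V₀) →L[ℂ] (U ⧸ U₀))‖ :=
  quotient_operator_invertible_perturbation_general U₀ U₁ V₀ V₁ hU₁ hV₁ H h0 h1 e₀ he₀ hdist
end
end

section
/- Let (X₀, X₁) be a Banach couple realized inside a complex vector space V, let 1 ≤ q < ∞ and 0 < θ₀ < θ₁ < 1. Then for every x ∈ i₀(X₀) + i₁(X₁) one has max{‖x‖_{θ₀,q}, ‖x‖_{θ₁,q}} ≤ sup_{θ₀ < θ < θ₁} ‖x‖_{θ,q}; consequently every x belonging to (X₀, X₁)_{θ,q} for all θ ∈ (θ₀, θ₁) with sup_{θ₀<θ<θ₁} ‖x‖_{θ,q} < ∞ belongs to (X₀, X₁)_{θ₀,q} ∩ (X₀, X₁)_{θ₁,q} with the corresponding norm bound. -/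
open MeasureTheory Set ENNReal

noncomputable section

/-- The Peetre K-functional of an element `x` of the ambient space, for a Banach couple
`(X₀, X₁)` realized inside `V` via `i₀, i₁`:
`K(t, x) = inf{ ‖x₀‖ + t‖x₁‖ : x = i₀ x₀ + i₁ x₁ }`. -/
def peetreK {V X₀ X₁ : Type*} [AddCommGroup V] [Module ℂ V]
    [NormedAddCommGroup X₀] [NormedSpace ℂ X₀] [NormedAddCommGroup X₁] [NormedSpace ℂ X₁]
    (i₀ : X₀ →ₗ[ℂ] V) (i₁ : X₁ →ₗ[ℂ] V) (t : ℝ) (x : V) : ℝ :=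
  sInf {r : ℝ | ∃ x₀ : X₀, ∃ x₁ : X₁, x = i₀ x₀ + i₁ x₁ ∧ r = ‖x₀‖ + t * ‖x₁‖}

/-- The real-interpolation norm `‖x‖_{θ,q} = (∫₀^∞ (t^{−θ} K(t,x))^q dt/t)^{1/q}`,
with values in `[0, ∞]`. -/
def interpNorm {V X₀ X₁ : Type*} [AddCommGroup V] [Module ℂ V]
    [NormedAddCommGroup X₀] [NormedSpace ℂ X₀] [NormedAddCommGroup X₁] [NormedSpace ℂ X₁]
    (i₀ : X₀ →ₗ[ℂ] V) (i₁ : X₁ →ₗ[ℂ] V) (θ q : ℝ) (x : V) : ℝ≥0∞ :=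
  (∫⁻ t in Ioi (0 : ℝ),
      (ENNReal.ofReal (t ^ (-θ) * peetreK i₀ i₁ t x)) ^ q * ENNReal.ofReal t⁻¹) ^ (1 / q)

/-- The real-interpolation norm `‖x‖_{θ,∞} = sup_{t>0} t^{−θ} K(t,x)`, in `[0, ∞]`. -/
def interpNormInf {V X₀ X₁ : Type*} [AddCommGroup V] [Module ℂ V]
    [NormedAddCommGroup X₀] [NormedSpace ℂ X₀] [NormedAddCommGroup X₁] [NormedSpace ℂ X₁]
    (i₀ : X₀ →ₗ[ℂ] V) (i₁ : X₁ →ₗ[ℂ] V) (θ : ℝ) (x : V) : ℝ≥0∞ :=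
  ⨆ t ∈ Ioi (0 : ℝ), ENNReal.ofReal (t ^ (-θ) * peetreK i₀ i₁ t x)

/-!
The map `θ ↦ ∫₀^∞ (t^{−θ} K(t, x))^q dt/t` is lower semicontinuous by Fatou's lemma, since its
integrand is continuous in `θ` for every `t > 0`; hence so is `θ ↦ ‖x‖_{θ,q}`. A lower
semicontinuous function is bounded on the closure of a set by its supremum over the set, and
`θ₀`, `θ₁` lie in the closure of `(θ₀, θ₁)`.
-/

open Filter Topology

theorem LowerSemicontinuous.le_biSup_of_mem_closure {X γ : Type*} [TopologicalSpace X]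
    [CompleteLinearOrder γ] [TopologicalSpace γ] [OrderTopology γ] {f : X → γ}
    (hf : LowerSemicontinuous f) {s : Set X} {x : X} (hx : x ∈ closure s) :
    f x ≤ ⨆ y ∈ s, f y :=
  closure_minimal (fun _ hy => le_biSup f hy) (hf.isClosed_preimage _) hx

theorem lowerSemicontinuous_lintegral {X α : Type*} [TopologicalSpace X]
    [FirstCountableTopology X] [MeasurableSpace α] {μ : Measure α} {F : X → α → ℝ≥0∞}
    (hmeas : ∀ y, AEMeasurable (F y) μ) (hcont : ∀ᵐ a ∂μ, Continuous fun y => F y a) :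
    LowerSemicontinuous fun y => ∫⁻ a, F y a ∂μ := by
  refine lowerSemicontinuous_iff_le_liminf.2 fun x => ?_
  calc ∫⁻ a, F x a ∂μ = ∫⁻ a, liminf (fun y => F y a) (𝓝 x) ∂μ :=
        lintegral_congr_ae (hcont.mono fun a ha => ((ha.tendsto x).liminf_eq).symm)
    _ ≤ liminf (fun y => ∫⁻ a, F y a ∂μ) (𝓝 x) := lintegral_liminf_le' hmeas

section

variable {V X₀ X₁ : Type*} [AddCommGroup V] [Module ℂ V]
    [NormedAddCommGroup X₀] [NormedSpace ℂ X₀] [NormedAddCommGroup X₁] [NormedSpace ℂ X₁]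
    (i₀ : X₀ →ₗ[ℂ] V) (i₁ : X₁ →ₗ[ℂ] V)

-- For `x ∉ i₀(X₀) + i₁(X₁)` the infimum is over the empty set, so `K(·, x) = 0`.
theorem peetreK_monotoneOn (x : V) : MonotoneOn (fun t => peetreK i₀ i₁ t x) (Ici 0) := by
  intro s hs t _ hst
  by_cases hx : ∃ x₀ : X₀, ∃ x₁ : X₁, x = i₀ x₀ + i₁ x₁
  · obtain ⟨a, b, hab⟩ := hx
    refine le_csInf ⟨‖a‖ + t * ‖b‖, a, b, hab, rfl⟩ ?_
    rintro r ⟨x₀, x₁, hx', rfl⟩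
    have hbdd :
        BddBelow {r : ℝ | ∃ y₀ : X₀, ∃ y₁ : X₁, x = i₀ y₀ + i₁ y₁ ∧ r = ‖y₀‖ + s * ‖y₁‖} := by
      refine ⟨0, ?_⟩
      rintro r ⟨y₀, y₁, -, rfl⟩
      have : 0 ≤ s := hs
      positivity
    refine csInf_le_of_le hbdd ⟨x₀, x₁, hx', rfl⟩ ?_
    gcongr
  · have hempty : ∀ u : ℝ,
        {r : ℝ | ∃ x₀ : X₀, ∃ x₁ : X₁, x = i₀ x₀ + i₁ x₁ ∧ r = ‖x₀‖ + u * ‖x₁‖} = ∅ :=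
      fun u => eq_empty_of_forall_notMem fun r ⟨x₀, x₁, h, _⟩ => hx ⟨x₀, x₁, h⟩
    simp only [peetreK, hempty, Real.sInf_empty, le_refl]

theorem lowerSemicontinuous_interpNorm (q : ℝ) (hq : 0 ≤ q) (x : V) :
    LowerSemicontinuous fun θ => interpNorm i₀ i₁ θ q x := by
  have hK : AEMeasurable (fun t => peetreK i₀ i₁ t x) (volume.restrict (Ioi 0)) :=
    aemeasurable_restrict_of_monotoneOn measurableSet_Ioi
      ((peetreK_monotoneOn i₀ i₁ x).mono Ioi_subset_Ici_self)
  have hmeas : ∀ θ : ℝ, AEMeasurable (fun t : ℝ =>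
      (ENNReal.ofReal (t ^ (-θ) * peetreK i₀ i₁ t x)) ^ q * ENNReal.ofReal t⁻¹)
      (volume.restrict (Ioi 0)) := fun θ =>
    (((measurable_id.pow_const _).aemeasurable.mul hK).ennreal_ofReal.pow_const q).mul
      measurable_inv.ennreal_ofReal.aemeasurable
  have hcont : ∀ᵐ t ∂volume.restrict (Ioi (0 : ℝ)), Continuous fun θ : ℝ =>
      (ENNReal.ofReal (t ^ (-θ) * peetreK i₀ i₁ t x)) ^ q * ENNReal.ofReal t⁻¹ := by
    filter_upwards [ae_restrict_mem measurableSet_Ioi] with t ht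
    have hpow : Continuous fun θ : ℝ => t ^ (-θ) :=
      continuous_iff_continuousAt.2 fun θ =>
        (Real.continuousAt_const_rpow (ne_of_gt ht)).comp continuous_neg.continuousAt
    exact (ENNReal.continuous_mul_const ofReal_ne_top).comp <| ENNReal.continuous_rpow_const.comp <|
      ENNReal.continuous_ofReal.comp (hpow.mul continuous_const)
  exact ENNReal.continuous_rpow_const.comp_lowerSemicontinuous
    (lowerSemicontinuous_lintegral hmeas hcont)
    (ENNReal.monotone_rpow_of_nonneg (by positivity))

end

theorem interp_endpoints_le_sup_intermediate_general
    {V X₀ X₁ : Type*} [AddCommGroup V] [Module ℂ V]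
    [NormedAddCommGroup X₀] [NormedSpace ℂ X₀]
    [NormedAddCommGroup X₁] [NormedSpace ℂ X₁]
    (i₀ : X₀ →ₗ[ℂ] V) (i₁ : X₁ →ₗ[ℂ] V)
    (q θ₀ θ₁ : ℝ) (hq : 1 ≤ q) (h₀₁ : θ₀ < θ₁)
    (x : V) :
    max (interpNorm i₀ i₁ θ₀ q x) (interpNorm i₀ i₁ θ₁ q x)
      ≤ ⨆ θ ∈ Ioo θ₀ θ₁, interpNorm i₀ i₁ θ q x := by
  have hlsc := lowerSemicontinuous_interpNorm i₀ i₁ q (by linarith) x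
  have hclosure : closure (Ioo θ₀ θ₁) = Icc θ₀ θ₁ := closure_Ioo h₀₁.ne
  exact max_le (hlsc.le_biSup_of_mem_closure (hclosure ▸ left_mem_Icc.2 h₀₁.le))
    (hlsc.le_biSup_of_mem_closure (hclosure ▸ right_mem_Icc.2 h₀₁.le))

/-- For `0 < θ₀ < θ₁ < 1` and `1 ≤ q < ∞`, the end norms are dominated by
the supremum of the intermediate norms: `max{‖x‖_{θ₀,q}, ‖x‖_{θ₁,q}} ≤ sup_{θ₀<θ<θ₁} ‖x‖_{θ,q}`.
Consequently, if `x ∈ (X₀,X₁)_{θ,q}` for all `θ ∈ (θ₀,θ₁)` with finite supremum of the norms,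
then `x ∈ (X₀,X₁)_{θ₀,q} ∩ (X₀,X₁)_{θ₁,q}` with the corresponding norm bound. -/
theorem interp_endpoints_le_sup_intermediate
    {V X₀ X₁ : Type*} [AddCommGroup V] [Module ℂ V]
    [NormedAddCommGroup X₀] [NormedSpace ℂ X₀] [CompleteSpace X₀]
    [NormedAddCommGroup X₁] [NormedSpace ℂ X₁] [CompleteSpace X₁]
    (i₀ : X₀ →ₗ[ℂ] V) (i₁ : X₁ →ₗ[ℂ] V) (hi₀ : Function.Injective i₀)
    (hi₁ : Function.Injective i₁)
    (q θ₀ θ₁ : ℝ) (hq : 1 ≤ q) (h₀ : 0 < θ₀) (h₀₁ : θ₀ < θ₁) (h₁ : θ₁ < 1)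
    (x : V) (hx : ∃ x₀ : X₀, ∃ x₁ : X₁, x = i₀ x₀ + i₁ x₁) :
    max (interpNorm i₀ i₁ θ₀ q x) (interpNorm i₀ i₁ θ₁ q x)
      ≤ ⨆ θ ∈ Ioo θ₀ θ₁, interpNorm i₀ i₁ θ q x :=
  interp_endpoints_le_sup_intermediate_general i₀ i₁ q θ₀ θ₁ hq h₀₁ x
end
end
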